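/- arXiv:1411.4696 — 6 statements merged into one kernel-verified Lean document; each statement's English description precedes it below -/
import Mathlib

section
/- Let G and G_T be commutative groups, e : G → G → G_T a bilinear map, g, Q ∈ G, and s₁, s₂, r, h integers. Set g₁ = g^{s₁}, g₂ = g^{s₂}, and define U = g^r, V = Q^{s₁h}·g₁^r, W = Q^{s₂}·g₂^r. Then the verification equations of the IBS scheme of Yuan et al. hold: e(V, g) = e(Q^h·U, g₁) and e(W, g) = e(Q·U, g₂). (Correctness of the IBS scheme.) -/
/-! Honest signatures satisfy `V = (Q^h·U)^{s₁}` and `W = (Q·U)^{s₂}`, so both verification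
equations are instances of `e(y^s, g) = e(y, g^s)`, which holds for any bilinear `e`. -/

section Bilinear

variable {G H : Type*} [Group G] [Group H] {e : G → G → H}

theorem map_zpow_left_of_map_mul_left (hl : ∀ x y z, e (x * y) z = e x z * e y z)
    (x y : G) (n : ℤ) : e (x ^ n) y = e x y ^ n :=
  (MonoidHom.mk' (e · y) fun a b => hl a b y).map_zpow x n

theorem map_zpow_right_of_map_mul_right (hr : ∀ x y z, e x (y * z) = e x y * e x z)
    (x y : G) (n : ℤ) : e x (y ^ n) = e x y ^ n :=
  (MonoidHom.mk' (e x) (hr x)).map_zpow y n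

theorem map_zpow_left_eq_map_zpow_right (hl : ∀ x y z, e (x * y) z = e x z * e y z)
    (hr : ∀ x y z, e x (y * z) = e x y * e x z) (x y : G) (n : ℤ) :
    e (x ^ n) y = e x (y ^ n) := by
  rw [map_zpow_left_of_map_mul_left hl, map_zpow_right_of_map_mul_right hr]

end Bilinear

/-- Correctness of the IBS scheme of Yuan et al.: an honestly generated
signature `(U, V, W) = (g^r, Q^{s₁h}·g₁^r, Q^{s₂}·g₂^r)` passes the
verification equations. -/
theorem ibs_correctness {G G_T : Type*} [CommGroup G] [CommGroup G_T]
    (e : G → G → G_T)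
    (hl : ∀ x y z : G, e (x * y) z = e x z * e y z)
    (hr : ∀ x y z : G, e x (y * z) = e x y * e x z)
    (g Q : G) (s₁ s₂ r h : ℤ)
    (g₁ g₂ : G) (hg₁ : g₁ = g ^ s₁) (hg₂ : g₂ = g ^ s₂)
    (U V W : G)
    (hU : U = g ^ r)
    (hV : V = Q ^ (s₁ * h) * g₁ ^ r)
    (hW : W = Q ^ s₂ * g₂ ^ r) :
    e V g = e (Q ^ h * U) g₁ ∧ e W g = e (Q * U) g₂ := by
  have hV' : V = (Q ^ h * U) ^ s₁ := by
    rw [hV, hU, hg₁, mul_zpow, ← zpow_mul, ← zpow_mul, ← zpow_mul, mul_comm h, mul_comm r]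
  have hW' : W = (Q * U) ^ s₂ := by
    rw [hW, hU, hg₂, mul_zpow, ← zpow_mul, ← zpow_mul, mul_comm r]
  rw [hV', hW', hg₁, hg₂]
  exact ⟨map_zpow_left_eq_map_zpow_right hl hr _ _ _,
    map_zpow_left_eq_map_zpow_right hl hr _ _ _⟩
end

section
/- Let p be a prime, G a commutative group in which every element satisfies x^p = 1, g, Q ∈ G, and s₁, s₂, r₁, r₂, h₁, h₂, h*, δ₁, δ₂ integers with δ₁·h₁ + δ₂·h₂ ≡ h* (mod p) and δ₁ + δ₂ ≡ 1 (mod p). Set g₁ = g^{s₁}, g₂ = g^{s₂} and for i = 1, 2 let (Uᵢ, Vᵢ, Wᵢ) = (g^{rᵢ}, Q^{s₁hᵢ}·g₁^{rᵢ}, Q^{s₂}·g₂^{rᵢ}). Then (U₁^{δ₁}·U₂^{δ₂}, V₁^{δ₁}·V₂^{δ₂}, W₁^{δ₁}·W₂^{δ₂}) = (g^{r*}, Q^{s₁h*}·g₁^{r*}, Q^{s₂}·g₂^{r*}) where r* = δ₁·r₁ + δ₂·r₂. That is, the linear combination of two honestly generated signatures with hash values h₁, h₂ is an honestly generated signature for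 hash value h* with randomness r*. (The forged-signature computation in the proof of Lemma 1.) -/
/-!
Exponents of elements of exponent `p` only matter modulo `p`. Each component of a signature has
the shape `x ^ e * y ^ f` with `y` fixed and `f` the randomness, so combining two signatures with
weights `δ₁, δ₂` combines both exponents linearly; the hypotheses on `δ₁, δ₂` say exactly that the
combined `Q`-exponents are, modulo `p`, the ones of an honest signature for `h*`.
-/

theorem zpow_eq_zpow_of_modEq {G : Type*} [Group G] {x : G} {n a b : ℤ} (hx : x ^ n = 1)
    (h : a ≡ b [ZMOD n]) : x ^ a = x ^ b := by
  rw [zpow_eq_zpow_emod a hx, zpow_eq_zpow_emod b hx, h.eq]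

theorem zpow_zpow_mul_zpow_zpow {G : Type*} [Group G] (y : G) (f₁ f₂ δ₁ δ₂ : ℤ) :
    (y ^ f₁) ^ δ₁ * (y ^ f₂) ^ δ₂ = y ^ (δ₁ * f₁ + δ₂ * f₂) := by
  rw [← zpow_mul, ← zpow_mul, ← zpow_add, mul_comm f₁, mul_comm f₂]

theorem zpow_mul_zpow_combination {G : Type*} [CommGroup G] {n : ℤ} {x : G} (hx : x ^ n = 1)
    (y : G) {e₁ e₂ e δ₁ δ₂ : ℤ} (he : δ₁ * e₁ + δ₂ * e₂ ≡ e [ZMOD n]) (f₁ f₂ : ℤ) :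
    (x ^ e₁ * y ^ f₁) ^ δ₁ * (x ^ e₂ * y ^ f₂) ^ δ₂ = x ^ e * y ^ (δ₁ * f₁ + δ₂ * f₂) := by
  rw [mul_zpow, mul_zpow, mul_mul_mul_comm, zpow_zpow_mul_zpow_zpow, zpow_zpow_mul_zpow_zpow,
    zpow_eq_zpow_of_modEq hx he]

theorem forged_signature_honest_general (p : ℕ)
    {G : Type*} [CommGroup G] (hexp : ∀ x : G, x ^ (p : ℤ) = 1)
    (g Q : G) (s₁ s₂ r₁ r₂ h₁ h₂ hs δ₁ δ₂ : ℤ)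
    (hδh : δ₁ * h₁ + δ₂ * h₂ ≡ hs [ZMOD (p : ℤ)])
    (hδ1 : δ₁ + δ₂ ≡ 1 [ZMOD (p : ℤ)])
    (g₁ g₂ : G)
    (U₁ V₁ W₁ U₂ V₂ W₂ : G)
    (hU₁ : U₁ = g ^ r₁) (hV₁ : V₁ = Q ^ (s₁ * h₁) * g₁ ^ r₁)
    (hW₁ : W₁ = Q ^ s₂ * g₂ ^ r₁)
    (hU₂ : U₂ = g ^ r₂) (hV₂ : V₂ = Q ^ (s₁ * h₂) * g₁ ^ r₂)
    (hW₂ : W₂ = Q ^ s₂ * g₂ ^ r₂) :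
    U₁ ^ δ₁ * U₂ ^ δ₂ = g ^ (δ₁ * r₁ + δ₂ * r₂) ∧
    V₁ ^ δ₁ * V₂ ^ δ₂ = Q ^ (s₁ * hs) * g₁ ^ (δ₁ * r₁ + δ₂ * r₂) ∧
    W₁ ^ δ₁ * W₂ ^ δ₂ = Q ^ s₂ * g₂ ^ (δ₁ * r₁ + δ₂ * r₂) := by
  subst hU₁ hV₁ hW₁ hU₂ hV₂ hW₂
  have hV : δ₁ * (s₁ * h₁) + δ₂ * (s₁ * h₂) ≡ s₁ * hs [ZMOD p] := by
    simpa only [mul_left_comm, mul_add] using hδh.mul_left s₁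
  have hW : δ₁ * s₂ + δ₂ * s₂ ≡ s₂ [ZMOD p] := by
    simpa only [one_mul, add_mul] using hδ1.mul_right s₂
  exact ⟨zpow_zpow_mul_zpow_zpow g r₁ r₂ δ₁ δ₂,
    zpow_mul_zpow_combination (hexp Q) g₁ hV r₁ r₂,
    zpow_mul_zpow_combination (hexp Q) g₂ hW r₁ r₂⟩

/-- The forged-signature computation in the proof of Lemma 1: the linear
combination (with coefficients `δ₁, δ₂` satisfying `δ₁h₁ + δ₂h₂ ≡ h*` and
`δ₁ + δ₂ ≡ 1` mod `p`) of two honestly generated signatures with hash values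
`h₁, h₂` is an honestly generated signature for hash value `h*` with
randomness `r* = δ₁r₁ + δ₂r₂`. -/
theorem forged_signature_honest (p : ℕ) (hp : p.Prime)
    {G : Type*} [CommGroup G] (hexp : ∀ x : G, x ^ (p : ℤ) = 1)
    (g Q : G) (s₁ s₂ r₁ r₂ h₁ h₂ hs δ₁ δ₂ : ℤ)
    (hδh : δ₁ * h₁ + δ₂ * h₂ ≡ hs [ZMOD (p : ℤ)])
    (hδ1 : δ₁ + δ₂ ≡ 1 [ZMOD (p : ℤ)])
    (g₁ g₂ : G) (hg₁ : g₁ = g ^ s₁) (hg₂ : g₂ = g ^ s₂)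
    (U₁ V₁ W₁ U₂ V₂ W₂ : G)
    (hU₁ : U₁ = g ^ r₁) (hV₁ : V₁ = Q ^ (s₁ * h₁) * g₁ ^ r₁)
    (hW₁ : W₁ = Q ^ s₂ * g₂ ^ r₁)
    (hU₂ : U₂ = g ^ r₂) (hV₂ : V₂ = Q ^ (s₁ * h₂) * g₁ ^ r₂)
    (hW₂ : W₂ = Q ^ s₂ * g₂ ^ r₂) :
    U₁ ^ δ₁ * U₂ ^ δ₂ = g ^ (δ₁ * r₁ + δ₂ * r₂) ∧
    V₁ ^ δ₁ * V₂ ^ δ₂ = Q ^ (s₁ * hs) * g₁ ^ (δ₁ * r₁ + δ₂ * r₂) ∧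
    W₁ ^ δ₁ * W₂ ^ δ₂ = Q ^ s₂ * g₂ ^ (δ₁ * r₁ + δ₂ * r₂) :=
  forged_signature_honest_general p hexp g Q s₁ s₂ r₁ r₂ h₁ h₂ hs δ₁ δ₂ hδh hδ1 g₁ g₂ U₁ V₁ W₁ U₂ V₂
    W₂ hU₁ hV₁ hW₁ hU₂ hV₂ hW₂
end

section
/- Let G and G_T be commutative groups, e : G → G → G_T a bilinear map, g, Q ∈ G, s₁, s₂ integers, g₁ = g^{s₁}, g₂ = g^{s₂}. Suppose (U₁, V₁, W₁) and (U₂, V₂, W₂) are valid signatures for integer hash values h₁ and h₂ respectively, i.e., e(Vᵢ, g) = e(Q^{hᵢ}·Uᵢ, g₁) and e(Wᵢ, g) = e(Q·Uᵢ, g₂) for i = 1, 2. Let δ₁, δ₂, h* be integers with δ₁·h₁ + δ₂·h₂ = h* and δ₁ + δ₂ = 1. Then (U*, V*, W*) = (U₁^{δ₁}·U₂^{δ₂}, V₁^{δ₁}·V₂^{δ₂}, W₁^{δ₁}·W₂^{δ₂}) is a valid signature for h*: e(V*, g) = e(Q^{h*}·U*, g₁) and e(W*, g) = e(Q·U*,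 g₂). (Equation-form of the forgery combination in Lemma 1.) -/
/-! Fixing the second argument, `e · z` is a group homomorphism `G →* G_T`, so each verification
equation is preserved when its two sides are combined with exponents `δ₁, δ₂`. In `G` the
combination of `Q ^ hᵢ * Uᵢ` collects to `Q ^ (δ₁ * h₁ + δ₂ * h₂) * U*` (and that of `Q * Uᵢ`
to `Q ^ (δ₁ + δ₂) * U*`). -/

theorem MonoidHom.map_zpow_mul_zpow_eq_of_eq {G H : Type*} [Group G] [Group H]
    (φ ψ : G →* H) {a₁ a₂ b₁ b₂ : G} (h₁ : φ a₁ = ψ b₁) (h₂ : φ a₂ = ψ b₂) (m n : ℤ) :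
    φ (a₁ ^ m * a₂ ^ n) = ψ (b₁ ^ m * b₂ ^ n) := by
  simp only [map_mul, map_zpow, h₁, h₂]

section CommGroup

variable {G : Type*} [CommGroup G]

theorem zpow_mul_mul_zpow_mul (x y z : G) (a b m n : ℤ) :
    (x ^ a * y) ^ m * (x ^ b * z) ^ n = x ^ (m * a + n * b) * (y ^ m * z ^ n) := by
  rw [mul_zpow, mul_zpow, ← zpow_mul, ← zpow_mul, mul_comm a, mul_comm b, zpow_add,
    mul_mul_mul_comm]

theorem mul_zpow_mul_mul_zpow (x y z : G) (m n : ℤ) :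
    (x * y) ^ m * (x * z) ^ n = x ^ (m + n) * (y ^ m * z ^ n) := by
  rw [mul_zpow, mul_zpow, zpow_add, mul_mul_mul_comm]

end CommGroup

theorem forgery_combination_general {G G_T : Type*} [CommGroup G] [CommGroup G_T]
    (e : G → G → G_T)
    (hl : ∀ x y z : G, e (x * y) z = e x z * e y z)
    (g Q : G)
    (g₁ g₂ : G)
    (h₁ h₂ hs δ₁ δ₂ : ℤ)
    (U₁ V₁ W₁ U₂ V₂ W₂ : G)
    (hV₁ : e V₁ g = e (Q ^ h₁ * U₁) g₁) (hW₁ : e W₁ g = e (Q * U₁) g₂)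
    (hV₂ : e V₂ g = e (Q ^ h₂ * U₂) g₁) (hW₂ : e W₂ g = e (Q * U₂) g₂)
    (hδh : δ₁ * h₁ + δ₂ * h₂ = hs) (hδ1 : δ₁ + δ₂ = 1) :
    e (V₁ ^ δ₁ * V₂ ^ δ₂) g = e (Q ^ hs * (U₁ ^ δ₁ * U₂ ^ δ₂)) g₁ ∧
    e (W₁ ^ δ₁ * W₂ ^ δ₂) g = e (Q * (U₁ ^ δ₁ * U₂ ^ δ₂)) g₂ := by
  let pairWith (z : G) : G →* G_T := MonoidHom.mk' (e · z) (hl · · z)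
  have hV := (pairWith g).map_zpow_mul_zpow_eq_of_eq (pairWith g₁) hV₁ hV₂ δ₁ δ₂
  have hW := (pairWith g).map_zpow_mul_zpow_eq_of_eq (pairWith g₂) hW₁ hW₂ δ₁ δ₂
  rw [zpow_mul_mul_zpow_mul, hδh] at hV
  rw [mul_zpow_mul_mul_zpow, hδ1, zpow_one] at hW
  exact ⟨hV, hW⟩

/-- Equation-form of the forgery combination in Lemma 1: the linear
combination of two valid signatures (with `δ₁h₁ + δ₂h₂ = h*` and
`δ₁ + δ₂ = 1` over the integers) is a valid signature for `h*`. -/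
theorem forgery_combination {G G_T : Type*} [CommGroup G] [CommGroup G_T]
    (e : G → G → G_T)
    (hl : ∀ x y z : G, e (x * y) z = e x z * e y z)
    (hr : ∀ x y z : G, e x (y * z) = e x y * e x z)
    (g Q : G) (s₁ s₂ : ℤ)
    (g₁ g₂ : G) (hg₁ : g₁ = g ^ s₁) (hg₂ : g₂ = g ^ s₂)
    (h₁ h₂ hs δ₁ δ₂ : ℤ)
    (U₁ V₁ W₁ U₂ V₂ W₂ : G)
    (hV₁ : e V₁ g = e (Q ^ h₁ * U₁) g₁) (hW₁ : e W₁ g = e (Q * U₁) g₂)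
    (hV₂ : e V₂ g = e (Q ^ h₂ * U₂) g₁) (hW₂ : e W₂ g = e (Q * U₂) g₂)
    (hδh : δ₁ * h₁ + δ₂ * h₂ = hs) (hδ1 : δ₁ + δ₂ = 1) :
    e (V₁ ^ δ₁ * V₂ ^ δ₂) g = e (Q ^ hs * (U₁ ^ δ₁ * U₂ ^ δ₂)) g₁ ∧
    e (W₁ ^ δ₁ * W₂ ^ δ₂) g = e (Q * (U₁ ^ δ₁ * U₂ ^ δ₂)) g₂ :=
  forgery_combination_general e hl g Q g₁ g₂ h₁ h₂ hs δ₁ δ₂ U₁ V₁ W₁ U₂ V₂ W₂ hV₁ hW₁ hV₂ hW₂ hδh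
    hδ1
end

section
/- Let G and G_T be commutative groups, e : G → G → G_T a bilinear map, g ∈ G, s₁, s₂ integers, g₁ = g^{s₁}, g₂ = g^{s₂}. Let S₁ and S₂ be disjoint finite index sets with elements Qᵢ ∈ G and integers hᵢ for i ∈ S₁ ∪ S₂. Suppose (U₁, V₁, W₁) is a valid aggregate signature for the family (Qᵢ, hᵢ)_{i∈S₁} and (U₂, V₂, W₂) is a valid aggregate signature for (Qᵢ, hᵢ)_{i∈S₂}, i.e., e(Vⱼ, g) = e((∏_{i∈Sⱼ} Qᵢ^{hᵢ})·Uⱼ, g₁) and e(Wⱼ, g) = e((∏_{i∈Sⱼ} Qᵢ)·Uⱼ, g₂) for j = 1, 2. Then (U₁·U₂, V₁·V₂, W₁·W₂) is a valid aggregate signature for the family (Qᵢ, hᵢ)_{i∈S₁∪S₂}. (Correctness of the Aggregate algorithm of the IBAS scheme of Yuan et al.) -/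
theorem pairing_mul_left_eq {G H K : Type*} [Mul G] [Mul K] {e : G → H → K}
    (hl : ∀ x y z, e (x * y) z = e x z * e y z) {a₁ a₂ b₁ b₂ : G} {c d : H}
    (h₁ : e a₁ c = e b₁ d) (h₂ : e a₂ c = e b₂ d) :
    e (a₁ * a₂) c = e (b₁ * b₂) d := by
  rw [hl, hl, h₁, h₂]

theorem aggregate_correctness_general {G G_T : Type*} [CommGroup G] [CommGroup G_T]
    (e : G → G → G_T)
    (hl : ∀ x y z : G, e (x * y) z = e x z * e y z)
    (g : G)
    (g₁ g₂ : G)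
    {ι : Type*} [DecidableEq ι] (S₁ S₂ : Finset ι) (hdisj : Disjoint S₁ S₂)
    (Q : ι → G) (h : ι → ℤ)
    (U₁ V₁ W₁ U₂ V₂ W₂ : G)
    (hV₁ : e V₁ g = e ((∏ i ∈ S₁, Q i ^ h i) * U₁) g₁)
    (hW₁ : e W₁ g = e ((∏ i ∈ S₁, Q i) * U₁) g₂)
    (hV₂ : e V₂ g = e ((∏ i ∈ S₂, Q i ^ h i) * U₂) g₁)
    (hW₂ : e W₂ g = e ((∏ i ∈ S₂, Q i) * U₂) g₂) :
    e (V₁ * V₂) g = e ((∏ i ∈ S₁ ∪ S₂, Q i ^ h i) * (U₁ * U₂)) g₁ ∧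
    e (W₁ * W₂) g = e ((∏ i ∈ S₁ ∪ S₂, Q i) * (U₁ * U₂)) g₂ := by
  rw [Finset.prod_union hdisj, Finset.prod_union hdisj,
    mul_mul_mul_comm (∏ i ∈ S₁, Q i ^ h i), mul_mul_mul_comm (∏ i ∈ S₁, Q i)]
  exact ⟨pairing_mul_left_eq hl hV₁ hV₂, pairing_mul_left_eq hl hW₁ hW₂⟩

/-- Correctness of the Aggregate algorithm of the IBAS scheme of Yuan et al.:
the componentwise product of two valid aggregate signatures on disjoint
multisets is a valid aggregate signature on the union. -/
theorem aggregate_correctness {G G_T : Type*} [CommGroup G] [CommGroup G_T]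
    (e : G → G → G_T)
    (hl : ∀ x y z : G, e (x * y) z = e x z * e y z)
    (hr : ∀ x y z : G, e x (y * z) = e x y * e x z)
    (g : G) (s₁ s₂ : ℤ)
    (g₁ g₂ : G) (hg₁ : g₁ = g ^ s₁) (hg₂ : g₂ = g ^ s₂)
    {ι : Type*} [DecidableEq ι] (S₁ S₂ : Finset ι) (hdisj : Disjoint S₁ S₂)
    (Q : ι → G) (h : ι → ℤ)
    (U₁ V₁ W₁ U₂ V₂ W₂ : G)
    (hV₁ : e V₁ g = e ((∏ i ∈ S₁, Q i ^ h i) * U₁) g₁)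
    (hW₁ : e W₁ g = e ((∏ i ∈ S₁, Q i) * U₁) g₂)
    (hV₂ : e V₂ g = e ((∏ i ∈ S₂, Q i ^ h i) * U₂) g₁)
    (hW₂ : e W₂ g = e ((∏ i ∈ S₂, Q i) * U₂) g₂) :
    e (V₁ * V₂) g = e ((∏ i ∈ S₁ ∪ S₂, Q i ^ h i) * (U₁ * U₂)) g₁ ∧
    e (W₁ * W₂) g = e ((∏ i ∈ S₁ ∪ S₂, Q i) * (U₁ * U₂)) g₂ :=
  aggregate_correctness_general e hl g g₁ g₂ S₁ S₂ hdisj Q h U₁ V₁ W₁ U₂ V₂ W₂ hV₁ hW₁ hV₂ hW₂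
end

section
/- Let G and G_T be commutative groups, e : G → G → G_T a bilinear map, g ∈ G, s₁, s₂ integers, g₁ = g^{s₁}, g₂ = g^{s₂}. Let S be a finite index set and, for each i ∈ S, let Qᵢ ∈ G, hᵢ an integer, and (Uᵢ, Vᵢ, Wᵢ) a valid individual signature, i.e., e(Vᵢ, g) = e(Qᵢ^{hᵢ}·Uᵢ, g₁) and e(Wᵢ, g) = e(Qᵢ·Uᵢ, g₂). Then the componentwise product (U, V, W) = (∏_{i∈S} Uᵢ, ∏_{i∈S} Vᵢ, ∏_{i∈S} Wᵢ) is a valid aggregate signature for the family (Qᵢ, hᵢ)_{i∈S}: e(V, g) = e((∏_{i∈S} Qᵢ^{hᵢ})·U, g₁) and e(W, g) = e((∏_{i∈S} Qᵢ)·U, g₂). (Full aggregation correctness of the IBAS scheme of Yuan et al.) -/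
open Finset

section Pairing

variable {G G_T : Type*} [CommGroup G] [CommGroup G_T] (e : G → G → G_T)

theorem pairing_prod_left (hl : ∀ x y z : G, e (x * y) z = e x z * e y z)
    {ι : Type*} (S : Finset ι) (f : ι → G) (z : G) :
    e (∏ i ∈ S, f i) z = ∏ i ∈ S, e (f i) z :=
  map_prod (MonoidHom.mk' (e · z) fun x y => hl x y z) f S

theorem pairing_prod_eq_of_forall_mem (hl : ∀ x y z : G, e (x * y) z = e x z * e y z)
    {ι : Type*} {S : Finset ι} {V A U : ι → G} {z z' : G}
    (hVAU : ∀ i ∈ S, e (V i) z = e (A i * U i) z') :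
    e (∏ i ∈ S, V i) z = e ((∏ i ∈ S, A i) * ∏ i ∈ S, U i) z' := by
  rw [pairing_prod_left e hl, ← prod_mul_distrib, pairing_prod_left e hl]
  exact prod_congr rfl hVAU

end Pairing

theorem full_aggregation_correctness_general {G G_T : Type*} [CommGroup G] [CommGroup G_T]
    (e : G → G → G_T)
    (hl : ∀ x y z : G, e (x * y) z = e x z * e y z)
    (g : G)
    (g₁ g₂ : G)
    {ι : Type*} (S : Finset ι) (Q : ι → G) (h : ι → ℤ)
    (U V W : ι → G)
    (hV : ∀ i ∈ S, e (V i) g = e (Q i ^ h i * U i) g₁)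
    (hW : ∀ i ∈ S, e (W i) g = e (Q i * U i) g₂) :
    e (∏ i ∈ S, V i) g = e ((∏ i ∈ S, Q i ^ h i) * ∏ i ∈ S, U i) g₁ ∧
    e (∏ i ∈ S, W i) g = e ((∏ i ∈ S, Q i) * ∏ i ∈ S, U i) g₂ :=
  ⟨pairing_prod_eq_of_forall_mem e hl hV, pairing_prod_eq_of_forall_mem e hl hW⟩

/-- Full aggregation correctness of the IBAS scheme of Yuan et al.: the
componentwise product of a finite family of valid individual signatures is a
valid aggregate signature for the family. -/
theorem full_aggregation_correctness {G G_T : Type*} [CommGroup G] [CommGroup G_T]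
    (e : G → G → G_T)
    (hl : ∀ x y z : G, e (x * y) z = e x z * e y z)
    (hr : ∀ x y z : G, e x (y * z) = e x y * e x z)
    (g : G) (s₁ s₂ : ℤ)
    (g₁ g₂ : G) (hg₁ : g₁ = g ^ s₁) (hg₂ : g₂ = g ^ s₂)
    {ι : Type*} (S : Finset ι) (Q : ι → G) (h : ι → ℤ)
    (U V W : ι → G)
    (hV : ∀ i ∈ S, e (V i) g = e (Q i ^ h i * U i) g₁)
    (hW : ∀ i ∈ S, e (W i) g = e (Q i * U i) g₂) :
    e (∏ i ∈ S, V i) g = e ((∏ i ∈ S, Q i ^ h i) * ∏ i ∈ S, U i) g₁ ∧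
    e (∏ i ∈ S, W i) g = e ((∏ i ∈ S, Q i) * ∏ i ∈ S, U i) g₂ :=
  full_aggregation_correctness_general e hl g g₁ g₂ S Q h U V W hV hW
end

section
/- Let G and G_T be commutative groups, e : G → G → G_T a bilinear map, g, Q ∈ G, s₁, s₂ integers, g₁ = g^{s₁}, g₂ = g^{s₂}. Suppose (U, V₁, W₁) and (U, V₂, W₂) are valid signatures for integer hash values h₁ and h₂ respectively, sharing the same first component U. Then e(V₁·V₂⁻¹, g) = e(Q, g₁)^{h₁ − h₂}. (The key identity used by the simulator of Yuan et al. to extract the CDH value from two forking forgeries with equal first components.) -/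
section LeftMultiplicative

variable {G H K : Type*} [Group G] [Group H] (e : G → K → H)

def MonoidHom.ofMapMulLeft (hl : ∀ (x y : G) (z : K), e (x * y) z = e x z * e y z)
    (z : K) : G →* H :=
  MonoidHom.mk' (fun x => e x z) (fun x y => hl x y z)

theorem map_div_left_of_map_mul (hl : ∀ (x y : G) (z : K), e (x * y) z = e x z * e y z)
    (x y : G) (z : K) : e (x / y) z = e x z / e y z :=
  map_div (MonoidHom.ofMapMulLeft e hl z) x y

theorem map_zpow_left_of_map_mul (hl : ∀ (x y : G) (z : K), e (x * y) z = e x z * e y z)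
    (x : G) (z : K) (n : ℤ) : e (x ^ n) z = e x z ^ n :=
  map_zpow (MonoidHom.ofMapMulLeft e hl z) x n

end LeftMultiplicative

theorem extraction_identity_general {G G_T : Type*} [CommGroup G] [CommGroup G_T]
    (e : G → G → G_T)
    (hl : ∀ x y z : G, e (x * y) z = e x z * e y z)
    (g Q : G)
    (g₁ : G)
    (h₁ h₂ : ℤ) (U V₁ V₂ : G)
    (hV₁ : e V₁ g = e (Q ^ h₁ * U) g₁)
    (hV₂ : e V₂ g = e (Q ^ h₂ * U) g₁) :
    e (V₁ * V₂⁻¹) g = e Q g₁ ^ (h₁ - h₂) := by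
  calc e (V₁ * V₂⁻¹) g = e V₁ g / e V₂ g := by
        rw [← div_eq_mul_inv, map_div_left_of_map_mul e hl]
    _ = e (Q ^ h₁ * U) g₁ / e (Q ^ h₂ * U) g₁ := by rw [hV₁, hV₂]
    _ = e (Q ^ (h₁ - h₂)) g₁ := by
        rw [← map_div_left_of_map_mul e hl, mul_div_mul_right_eq_div, zpow_sub, div_eq_mul_inv]
    _ = e Q g₁ ^ (h₁ - h₂) := map_zpow_left_of_map_mul e hl Q g₁ _

/-- The key identity used by the simulator of Yuan et al. to extract the CDH
value from two forking forgeries with equal first components: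
`e(V₁·V₂⁻¹, g) = e(Q, g₁)^{h₁ − h₂}`. -/
theorem extraction_identity {G G_T : Type*} [CommGroup G] [CommGroup G_T]
    (e : G → G → G_T)
    (hl : ∀ x y z : G, e (x * y) z = e x z * e y z)
    (hr : ∀ x y z : G, e x (y * z) = e x y * e x z)
    (g Q : G) (s₁ s₂ : ℤ)
    (g₁ g₂ : G) (hg₁ : g₁ = g ^ s₁) (hg₂ : g₂ = g ^ s₂)
    (h₁ h₂ : ℤ) (U V₁ W₁ V₂ W₂ : G)
    (hV₁ : e V₁ g = e (Q ^ h₁ * U) g₁) (hW₁ : e W₁ g = e (Q * U) g₂)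
    (hV₂ : e V₂ g = e (Q ^ h₂ * U) g₁) (hW₂ : e W₂ g = e (Q * U) g₂) :
    e (V₁ * V₂⁻¹) g = e Q g₁ ^ (h₁ - h₂) :=
  extraction_identity_general e hl g Q g₁ h₁ h₂ U V₁ V₂ hV₁ hV₂
end
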